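/- Let n ≥ 1 and m ≥ 1 be natural numbers, let λ ∈ ℂ with |λ| < 1, and let c : ℕ → ℂⁿ be such that the series ∑_{j=0}^∞ ‖c_j‖·|λ|^j converges. Define â : ℕ → ℂ by â_j = \overline{λ}^{j−m} if j ≥ m and â_j = 0 if j < m. Then ∑_{k=0}^∞ |â_k|² + ∑_{k=0}^∞ ‖∑_{j=0}^∞ â_{j+k} · \overline{c_j}‖² = (1 + ‖∑_{j=0}^∞ \overline{λ}^j · \overline{c_j}‖²) / (1 − |λ|²) + ∑_{k=0}^{m−1} ‖∑_{j=0}^∞ \overline{λ}^j · \overline{c_{j+m−k}}‖², and all series appearing converge. -/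

import Mathlib

/-!
Write `μ = conj λ`, `vⱼ = conj cⱼ`, `S = ∑ μʲ vⱼ` and `â = shiftedGeom m μ`. For `k ≥ m` the
`k`-th column sum `∑ â_{j+k} vⱼ` is `μ^(k-m) S` and `|â_k|² = |μ|^(2(k-m))`, so beyond index `m`
both series over `k` are geometric with ratio `|λ|²` and together contribute
`(1 + ‖S‖²)/(1 - |λ|²)`. For `k < m` we have `â_k = 0`, and the column sum starts with `m - k`
zero terms, leaving the reindexed series `∑ μʲ v_{j+m-k}`.
-/

/-- Componentwise complex conjugate of a vector in `ℂⁿ`. -/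
noncomputable def conjVec {n : ℕ} (v : EuclideanSpace ℂ (Fin n)) : EuclideanSpace ℂ (Fin n) :=
  WithLp.toLp 2 (fun i => starRingEnd ℂ (v i))

open Finset

lemma norm_conjVec {n : ℕ} (v : EuclideanSpace ℂ (Fin n)) : ‖conjVec v‖ = ‖v‖ := by
  simp [EuclideanSpace.norm_eq, conjVec]

lemma hasSum_of_eq_geometric_add {g : ℕ → ℝ} {r C : ℝ} (hr₀ : 0 ≤ r) (hr₁ : r < 1) (m : ℕ)
    (hg : ∀ k, g (k + m) = C * r ^ k) :
    HasSum g (C * (1 - r)⁻¹ + ∑ k ∈ range m, g k) :=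
  (hasSum_nat_add_iff m).1 <| by
    simpa only [hg] using (hasSum_geometric_of_lt_one hr₀ hr₁).mul_left C

section ShiftedGeom

variable {𝕜 E : Type*} [NormedField 𝕜] [NormedAddCommGroup E] [NormedSpace 𝕜 E]

def shiftedGeom (m : ℕ) (μ : 𝕜) (j : ℕ) : 𝕜 := if m ≤ j then μ ^ (j - m) else 0

variable {m k : ℕ} {μ : 𝕜} {v : ℕ → E}

lemma shiftedGeom_of_lt (h : k < m) : shiftedGeom m μ k = 0 := if_neg (not_le.2 h)

lemma shiftedGeom_add (μ : 𝕜) (m k : ℕ) : shiftedGeom m μ (k + m) = μ ^ k := by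
  simp [shiftedGeom]

lemma summable_pow_smul_comp_add [CompleteSpace E] (hv : Summable fun j => ‖v j‖ * ‖μ‖ ^ j)
    (d : ℕ) : Summable fun j => μ ^ j • v (j + d) := by
  rcases eq_or_ne μ 0 with rfl | hμ
  · exact summable_of_ne_finset_zero (s := {0}) fun j hj => by
      simp [zero_pow (show j ≠ 0 by simpa using hj)]
  -- for `μ ≠ 0` this is the tail of `∑ μ^j • v j`, rescaled by `μ^(-d)`
  refine Summable.of_norm ?_
  refine (((summable_nat_add_iff d).2 hv).mul_right (‖μ‖ ^ d)⁻¹).congr fun j => ?_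
  rw [norm_smul, norm_pow, pow_add]
  field_simp [pow_ne_zero d (norm_ne_zero_iff.2 hμ)]

lemma hasSum_shiftedGeom_smul_of_le (hS : Summable fun j => μ ^ j • v j) (hk : m ≤ k) :
    HasSum (fun j => shiftedGeom m μ (j + k) • v j) (μ ^ (k - m) • ∑' j, μ ^ j • v j) := by
  convert hS.hasSum.const_smul (μ ^ (k - m)) using 2 with j
  rw [shiftedGeom, if_pos (by omega), smul_smul, ← pow_add]
  congr 2
  omega

lemma hasSum_shiftedGeom_smul_of_lt (hS : Summable fun j => μ ^ j • v (j + m - k))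
    (hk : k < m) :
    HasSum (fun j => shiftedGeom m μ (j + k) • v j) (∑' j, μ ^ j • v (j + m - k)) := by
  refine (hasSum_nat_add_iff' (m - k)).1 ?_
  rw [sum_eq_zero fun j hj => by
    rw [shiftedGeom_of_lt (by have := mem_range.1 hj; omega), zero_smul], sub_zero]
  convert hS.hasSum using 2 with j
  rw [show j + (m - k) + k = j + m by omega, shiftedGeom_add,
    show j + (m - k) = j + m - k by omega]

lemma summable_shiftedGeom_smul (hS : Summable fun j => μ ^ j • v j)
    (hSk : ∀ k < m, Summable fun j => μ ^ j • v (j + m - k)) (k : ℕ) :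
    Summable fun j => shiftedGeom m μ (j + k) • v j :=
  (le_or_gt m k).elim (fun hk => (hasSum_shiftedGeom_smul_of_le hS hk).summable)
    fun hk => (hasSum_shiftedGeom_smul_of_lt (hSk k hk) hk).summable

lemma hasSum_norm_shiftedGeom_sq (hμ : ‖μ‖ ^ 2 < 1) :
    HasSum (fun k => ‖shiftedGeom m μ k‖ ^ 2) (1 - ‖μ‖ ^ 2)⁻¹ := by
  have h := hasSum_of_eq_geometric_add (sq_nonneg ‖μ‖) hμ m
    (g := fun k => ‖shiftedGeom m μ k‖ ^ 2) (C := 1) fun k => by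
      simp [shiftedGeom_add, ← pow_mul, mul_comm]
  rwa [sum_eq_zero fun k hk => by simp [shiftedGeom_of_lt (mem_range.1 hk)], one_mul,
    add_zero] at h

lemma hasSum_norm_tsum_shiftedGeom_smul_sq (hμ : ‖μ‖ ^ 2 < 1)
    (hS : Summable fun j => μ ^ j • v j)
    (hSk : ∀ k < m, Summable fun j => μ ^ j • v (j + m - k)) :
    HasSum (fun k => ‖∑' j, shiftedGeom m μ (j + k) • v j‖ ^ 2)
      (‖∑' j, μ ^ j • v j‖ ^ 2 * (1 - ‖μ‖ ^ 2)⁻¹ +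
        ∑ k ∈ range m, ‖∑' j, μ ^ j • v (j + m - k)‖ ^ 2) := by
  convert hasSum_of_eq_geometric_add (sq_nonneg ‖μ‖) hμ m
    (g := fun k => ‖∑' j, shiftedGeom m μ (j + k) • v j‖ ^ 2) (fun k => ?_) using 2
  · refine sum_congr rfl fun k hk => ?_
    rw [(hasSum_shiftedGeom_smul_of_lt (hSk k (mem_range.1 hk)) (mem_range.1 hk)).tsum_eq]
  · rw [(hasSum_shiftedGeom_smul_of_le hS (Nat.le_add_left m k)).tsum_eq]
    simp [norm_smul, mul_pow, ← pow_mul, mul_comm]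

end ShiftedGeom

theorem stmt16_general (n : ℕ) (m : ℕ) (l : ℂ) (hl : ‖l‖ < 1)
    (c : ℕ → EuclideanSpace ℂ (Fin n))
    (hc : Summable fun j : ℕ => ‖c j‖ * ‖l‖ ^ j)
    (f : ℕ → ℂ)
    (hf : ∀ j : ℕ, f j = if m ≤ j then (starRingEnd ℂ l) ^ (j - m) else 0) :
    (Summable fun k : ℕ => ‖f k‖ ^ 2) ∧
    (∀ k : ℕ, Summable fun j : ℕ => f (j + k) • conjVec (c j)) ∧
    (Summable fun k : ℕ => ‖∑' j : ℕ, f (j + k) • conjVec (c j)‖ ^ 2) ∧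
    (Summable fun j : ℕ => (starRingEnd ℂ l) ^ j • conjVec (c j)) ∧
    (∀ k : ℕ, k < m → Summable fun j : ℕ => (starRingEnd ℂ l) ^ j • conjVec (c (j + m - k))) ∧
    ((∑' k : ℕ, ‖f k‖ ^ 2) +
        ∑' k : ℕ, ‖∑' j : ℕ, f (j + k) • conjVec (c j)‖ ^ 2 =
      (1 + ‖∑' j : ℕ, (starRingEnd ℂ l) ^ j • conjVec (c j)‖ ^ 2) / (1 - ‖l‖ ^ 2) +
        ∑ k ∈ Finset.range m,
          ‖∑' j : ℕ, (starRingEnd ℂ l) ^ j • conjVec (c (j + m - k))‖ ^ 2) := by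
  obtain rfl : f = shiftedGeom m (starRingEnd ℂ l) := funext hf
  set μ := starRingEnd ℂ l
  have hμ : ‖μ‖ = ‖l‖ := Complex.norm_conj l
  have hr₁ : ‖μ‖ ^ 2 < 1 := pow_lt_one₀ (norm_nonneg _) (hμ ▸ hl) two_ne_zero
  have hv : Summable fun j => ‖conjVec (c j)‖ * ‖μ‖ ^ j := by
    simpa only [norm_conjVec, hμ] using hc
  have hS : Summable fun j => μ ^ j • conjVec (c j) := by
    simpa using summable_pow_smul_comp_add hv 0
  have hSk : ∀ k < m, Summable fun j => μ ^ j • conjVec (c (j + m - k)) := fun k hk => by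
    simpa only [Nat.add_sub_assoc hk.le] using summable_pow_smul_comp_add hv (m - k)
  have hcoeff := hasSum_norm_shiftedGeom_sq (m := m) hr₁
  have hcolumns := hasSum_norm_tsum_shiftedGeom_smul_sq hr₁ hS hSk
  refine ⟨hcoeff.summable, summable_shiftedGeom_smul hS hSk, hcolumns.summable, hS, hSk, ?_⟩
  rw [hcoeff.tsum_eq, hcolumns.tsum_eq, hμ]
  field_simp
  ring

theorem stmt16 (n : ℕ) (hn : 1 ≤ n) (m : ℕ) (hm : 1 ≤ m) (l : ℂ) (hl : ‖l‖ < 1)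
    (c : ℕ → EuclideanSpace ℂ (Fin n))
    (hc : Summable fun j : ℕ => ‖c j‖ * ‖l‖ ^ j)
    (f : ℕ → ℂ)
    (hf : ∀ j : ℕ, f j = if m ≤ j then (starRingEnd ℂ l) ^ (j - m) else 0) :
    (Summable fun k : ℕ => ‖f k‖ ^ 2) ∧
    (∀ k : ℕ, Summable fun j : ℕ => f (j + k) • conjVec (c j)) ∧
    (Summable fun k : ℕ => ‖∑' j : ℕ, f (j + k) • conjVec (c j)‖ ^ 2) ∧
    (Summable fun j : ℕ => (starRingEnd ℂ l) ^ j • conjVec (c j)) ∧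
    (∀ k : ℕ, k < m → Summable fun j : ℕ => (starRingEnd ℂ l) ^ j • conjVec (c (j + m - k))) ∧
    ((∑' k : ℕ, ‖f k‖ ^ 2) +
        ∑' k : ℕ, ‖∑' j : ℕ, f (j + k) • conjVec (c j)‖ ^ 2 =
      (1 + ‖∑' j : ℕ, (starRingEnd ℂ l) ^ j • conjVec (c j)‖ ^ 2) / (1 - ‖l‖ ^ 2) +
        ∑ k ∈ Finset.range m,
          ‖∑' j : ℕ, (starRingEnd ℂ l) ^ j • conjVec (c (j + m - k))‖ ^ 2) :=
  stmt16_general n m l hl c hc f hf
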